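/- arXiv:2508.17698 — 2 statements merged into one kernel-verified Lean document; each statement's English description precedes it below -/
import Mathlib

section
/- Let λ₁ and λ₂ be two distinct points of 𝔻 and let ω₁, ω₂ ∈ 𝔻. Then the matrix M_Φ(λ₁,λ₂;ω₁,ω₂) is positive semi-definite if and only if there exists a holomorphic function f on 𝔻 with sup_{λ∈𝔻}|f(λ)| ≤ 1 such that f(λ₁) = ω₁ and f(λ₂) = ω₂. -/
/-!
With `φ_a z = (z - a) / (1 - conj a * z)`, the identity
`1 - |φ_a z|² = (1 - |a|²)(1 - |z|²) / |1 - conj a * z|²` turns the determinant condition for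
the 2 × 2 matrix `M_Φ` into `|φ_{ω₁} ω₂| ≤ |φ_{λ₁} λ₂|`. This inequality is necessary for the
Pick problem by the Schwarz lemma applied to `φ_{ω₁} ∘ f ∘ φ_{-λ₁}`, and sufficient because
`φ_{-ω₁} ∘ (c • φ_{λ₁})` with `c = φ_{ω₁} ω₂ / φ_{λ₁} λ₂` interpolates.
-/

open Complex ComplexConjugate ComplexOrder Metric Set Matrix

noncomputable def mobius (a z : ℂ) : ℂ := (z - a) / (1 - conj a * z)

section Mobius

variable {a z : ℂ}

lemma normSq_lt_one_iff : normSq z < 1 ↔ ‖z‖ < 1 := by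
  rw [normSq_eq_norm_sq, sq_lt_one_iff₀ (norm_nonneg z)]

lemma normSq_le_one_iff : normSq z ≤ 1 ↔ ‖z‖ ≤ 1 := by
  rw [normSq_eq_norm_sq, sq_le_one_iff₀ (norm_nonneg z)]

lemma one_sub_normSq_pos (hz : ‖z‖ < 1) : 0 < 1 - normSq z :=
  sub_pos.2 (normSq_lt_one_iff.2 hz)

lemma normSq_one_sub_conj_mul (a z : ℂ) :
    normSq (1 - conj a * z) = normSq (z - a) + (1 - normSq a) * (1 - normSq z) := by
  simp only [normSq_apply, sub_re, sub_im, mul_re, mul_im, one_re, one_im, conj_re, conj_im]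
  ring

lemma normSq_one_sub_mul_conj (a z : ℂ) : normSq (1 - a * conj z) = normSq (1 - conj a * z) := by
  rw [← normSq_conj]
  simp

lemma one_sub_conj_mul_ne_zero (ha : ‖a‖ < 1) (hz : ‖z‖ ≤ 1) : 1 - conj a * z ≠ 0 := by
  refine sub_ne_zero.2 fun h => ?_
  have : ‖conj a * z‖ < 1 := by
    rw [norm_mul, norm_conj]
    nlinarith [norm_nonneg a, norm_nonneg z]
  simp [← h] at this

lemma one_sub_normSq_mobius (h : 1 - conj a * z ≠ 0) :
    1 - normSq (mobius a z) = (1 - normSq a) * (1 - normSq z) / normSq (1 - conj a * z) := by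
  rw [mobius, map_div₀, one_sub_div (normSq_pos.2 h).ne', normSq_one_sub_conj_mul,
    add_sub_cancel_left]

lemma norm_mobius_lt_one (ha : ‖a‖ < 1) (hz : ‖z‖ < 1) : ‖mobius a z‖ < 1 := by
  have h := one_sub_normSq_mobius (one_sub_conj_mul_ne_zero ha hz.le)
  have : 0 < (1 - normSq a) * (1 - normSq z) / normSq (1 - conj a * z) :=
    div_pos (mul_pos (one_sub_normSq_pos ha) (one_sub_normSq_pos hz))
      (normSq_pos.2 (one_sub_conj_mul_ne_zero ha hz.le))
  rw [← normSq_lt_one_iff]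
  linarith

lemma norm_mobius_le_one (ha : ‖a‖ < 1) (hz : ‖z‖ ≤ 1) : ‖mobius a z‖ ≤ 1 := by
  have h := one_sub_normSq_mobius (one_sub_conj_mul_ne_zero ha hz)
  have : 0 ≤ (1 - normSq a) * (1 - normSq z) / normSq (1 - conj a * z) :=
    div_nonneg (mul_nonneg (one_sub_normSq_pos ha).le (sub_nonneg.2 (normSq_le_one_iff.2 hz)))
      (normSq_nonneg _)
  rw [← normSq_le_one_iff]
  linarith

lemma mapsTo_mobius_ball (ha : ‖a‖ < 1) : MapsTo (mobius a) (ball 0 1) (ball 0 1) :=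
  fun _ hz => mem_ball_zero_iff.2 <| norm_mobius_lt_one ha (mem_ball_zero_iff.1 hz)

lemma mapsTo_mobius_closedBall (ha : ‖a‖ < 1) :
    MapsTo (mobius a) (closedBall 0 1) (closedBall 0 1) :=
  fun _ hz => mem_closedBall_zero_iff.2 <| norm_mobius_le_one ha (mem_closedBall_zero_iff.1 hz)

@[simp] lemma mobius_self (a : ℂ) : mobius a a = 0 := by simp [mobius]

@[simp] lemma mobius_neg_zero (a : ℂ) : mobius (-a) 0 = a := by simp [mobius]

lemma mobius_ne_zero (hz : z ≠ a) (h : 1 - conj a * z ≠ 0) : mobius a z ≠ 0 :=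
  div_ne_zero (sub_ne_zero.2 hz) h

lemma mobius_neg_mobius (ha : ‖a‖ < 1) (h : 1 - conj a * z ≠ 0) :
    mobius (-a) (mobius a z) = z := by
  have hna : 1 - conj a * a ≠ 0 := one_sub_conj_mul_ne_zero ha ha.le
  have h' : 1 - z * conj a ≠ 0 := by rwa [mul_comm]
  have hnum : mobius a z + a = z * (1 - conj a * a) / (1 - conj a * z) := by
    rw [mobius]; field_simp; ring
  have hden : 1 + conj a * mobius a z = (1 - conj a * a) / (1 - conj a * z) := by
    rw [mobius]; field_simp; ring
  rw [mobius, map_neg, sub_neg_eq_add, neg_mul, sub_neg_eq_add, hnum, hden]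
  field_simp

end Mobius

lemma DifferentiableOn.mobius {a : ℂ} {g : ℂ → ℂ} {s : Set ℂ} (hg : DifferentiableOn ℂ g s)
    (ha : ‖a‖ < 1) (hgs : MapsTo g s (closedBall 0 1)) :
    DifferentiableOn ℂ (fun z => mobius a (g z)) s :=
  (hg.sub_const a).div ((differentiableOn_const 1).sub (hg.const_mul _)) fun _ hz =>
    one_sub_conj_mul_ne_zero ha (mem_closedBall_zero_iff.1 (hgs hz))

theorem norm_mobius_le_norm_mobius_of_mapsTo {f : ℂ → ℂ} (hd : DifferentiableOn ℂ f (ball 0 1))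
    (hf : MapsTo f (ball 0 1) (closedBall 0 1)) {z₁ z₂ : ℂ} (hz₁ : ‖z₁‖ < 1) (hz₂ : ‖z₂‖ < 1)
    (hfz₁ : ‖f z₁‖ < 1) : ‖mobius (f z₁) (f z₂)‖ ≤ ‖mobius z₁ z₂‖ := by
  have hz₁' : ‖-z₁‖ < 1 := by rwa [norm_neg]
  have hmaps : MapsTo (fun z => f (mobius (-z₁) z)) (ball 0 1) (closedBall 0 1) :=
    hf.comp (mapsTo_mobius_ball hz₁')
  have hdiff : DifferentiableOn ℂ (fun z => f (mobius (-z₁) z)) (ball 0 1) :=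
    hd.comp (differentiableOn_id.mobius hz₁' ball_subset_closedBall) (mapsTo_mobius_ball hz₁')
  have hschwarz := Complex.norm_le_norm_of_mapsTo_ball (hdiff.mobius hfz₁ hmaps)
    ((mapsTo_mobius_closedBall hfz₁).comp hmaps) (by simp) (norm_mobius_lt_one hz₁ hz₂)
  rwa [mobius_neg_mobius hz₁ (one_sub_conj_mul_ne_zero hz₁ hz₂.le)] at hschwarz

theorem exists_mapsTo_closedBall_of_norm_mobius_le {z₁ z₂ w₁ w₂ : ℂ} (hz₁ : ‖z₁‖ < 1)
    (hz₂ : ‖z₂‖ < 1) (hne : z₁ ≠ z₂) (hw₁ : ‖w₁‖ < 1) (hw₂ : ‖w₂‖ < 1)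
    (h : ‖mobius w₁ w₂‖ ≤ ‖mobius z₁ z₂‖) :
    ∃ f : ℂ → ℂ, DifferentiableOn ℂ f (ball 0 1) ∧ MapsTo f (ball 0 1) (closedBall 0 1) ∧
      f z₁ = w₁ ∧ f z₂ = w₂ := by
  set c := mobius w₁ w₂ / mobius z₁ z₂
  have hc : ‖c‖ ≤ 1 := by
    rw [norm_div]
    exact div_le_one_of_le₀ h (norm_nonneg _)
  have hmaps : MapsTo (fun z => c * mobius z₁ z) (ball 0 1) (closedBall 0 1) := fun z hz => by
    rw [mem_closedBall_zero_iff, norm_mul]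
    exact mul_le_one₀ hc (norm_nonneg _) (norm_mobius_lt_one hz₁ (mem_ball_zero_iff.1 hz)).le
  have hdiff : DifferentiableOn ℂ (fun z => c * mobius z₁ z) (ball 0 1) :=
    (differentiableOn_id.mobius hz₁ ball_subset_closedBall).const_mul c
  have hw₁' : ‖-w₁‖ < 1 := by rwa [norm_neg]
  refine ⟨fun z => mobius (-w₁) (c * mobius z₁ z), hdiff.mobius hw₁' hmaps,
    (mapsTo_mobius_closedBall hw₁').comp hmaps, by simp, ?_⟩
  have hmob : mobius z₁ z₂ ≠ 0 := mobius_ne_zero hne.symm (one_sub_conj_mul_ne_zero hz₁ hz₂.le)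
  simp only [c, div_mul_cancel₀ _ hmob]
  exact mobius_neg_mobius hw₁ (one_sub_conj_mul_ne_zero hw₁ hw₂.le)

lemma Matrix.posSemidef_fin_two_iff {a d : ℝ} {b : ℂ} (ha : 0 < a) :
    (!![(a : ℂ), b; conj b, (d : ℂ)]).PosSemidef ↔ normSq b ≤ a * d := by
  constructor
  · intro h
    have hq := h.dotProduct_mulVec_nonneg ![-b, (a : ℂ)]
    have : star ![-b, (a : ℂ)] ⬝ᵥ (!![(a : ℂ), b; conj b, (d : ℂ)] *ᵥ ![-b, (a : ℂ)]) =
        ((a * (a * d - normSq b) : ℝ) : ℂ) := by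
      simp [dotProduct, Fin.sum_univ_two, mulVec, normSq_eq_conj_mul_self]
      ring
    rw [this, zero_le_real] at hq
    nlinarith
  · intro h
    refine PosSemidef.of_dotProduct_mulVec_nonneg ?_ fun x => ?_
    · ext i j
      fin_cases i <;> fin_cases j <;> simp
    · have : star x ⬝ᵥ (!![(a : ℂ), b; conj b, (d : ℂ)] *ᵥ x) =
          (((normSq (a * x 0 + b * x 1) + (a * d - normSq b) * normSq (x 1)) / a : ℝ) : ℂ) := by
        simp [dotProduct, Fin.sum_univ_two, mulVec, normSq_eq_conj_mul_self]
        field_simp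
        ring
      rw [this, zero_le_real]
      exact div_nonneg (add_nonneg (normSq_nonneg _)
        (mul_nonneg (sub_nonneg.2 h) (normSq_nonneg _))) ha.le

noncomputable def MPhi {ι : Type*} (l w : ι → ℂ) : Matrix ι ι ℂ :=
  of fun i j => (1 - w i * conj (w j)) ^ 2 / (1 - l i * conj (l j)) ^ 2

theorem MPhi_posSemidef_iff_norm_mobius_le {l₁ l₂ w₁ w₂ : ℂ} (hl₁ : ‖l₁‖ < 1) (hl₂ : ‖l₂‖ < 1)
    (hw₁ : ‖w₁‖ < 1) (hw₂ : ‖w₂‖ < 1) :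
    (MPhi ![l₁, l₂] ![w₁, w₂]).PosSemidef ↔ ‖mobius w₁ w₂‖ ≤ ‖mobius l₁ l₂‖ := by
  set b := ((1 - w₁ * conj w₂) / (1 - l₁ * conj l₂)) ^ 2
  have hM : MPhi ![l₁, l₂] ![w₁, w₂] = !![((((1 - normSq w₁) / (1 - normSq l₁)) ^ 2 : ℝ) : ℂ), b;
      conj b, ((((1 - normSq w₂) / (1 - normSq l₂)) ^ 2 : ℝ) : ℂ)] := by
    ext i j
    fin_cases i <;> fin_cases j <;> simp [MPhi, b, mul_conj, div_pow, mul_comm]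
  have hNw := normSq_pos.2 (one_sub_conj_mul_ne_zero hw₁ hw₂.le)
  have hNl := normSq_pos.2 (one_sub_conj_mul_ne_zero hl₁ hl₂.le)
  have hAl := mul_pos (one_sub_normSq_pos hl₁) (one_sub_normSq_pos hl₂)
  have hAw := mul_pos (one_sub_normSq_pos hw₁) (one_sub_normSq_pos hw₂)
  have hb : normSq b = (normSq (1 - conj w₁ * w₂) / normSq (1 - conj l₁ * l₂)) ^ 2 := by
    simp only [b, map_pow, map_div₀, normSq_one_sub_mul_conj]
  have hmob : ‖mobius w₁ w₂‖ ≤ ‖mobius l₁ l₂‖ ↔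
      (1 - normSq l₁) * (1 - normSq l₂) / normSq (1 - conj l₁ * l₂) ≤
        (1 - normSq w₁) * (1 - normSq w₂) / normSq (1 - conj w₁ * w₂) := by
    rw [← one_sub_normSq_mobius (one_sub_conj_mul_ne_zero hl₁ hl₂.le),
      ← one_sub_normSq_mobius (one_sub_conj_mul_ne_zero hw₁ hw₂.le), sub_le_sub_iff_left,
      normSq_eq_norm_sq, normSq_eq_norm_sq,
      pow_le_pow_iff_left₀ (norm_nonneg _) (norm_nonneg _) two_ne_zero]
  rw [hM, posSemidef_fin_two_iff (pow_pos (div_pos (one_sub_normSq_pos hw₁)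
    (one_sub_normSq_pos hl₁)) 2), hb, ← mul_pow, div_mul_div_comm,
    pow_le_pow_iff_left₀ (div_pos hNw hNl).le (div_pos hAw hAl).le two_ne_zero, hmob,
    div_le_div_iff₀ hNl hAl, div_le_div_iff₀ hNl hNw]
  rw [mul_comm (normSq _)]

/-- Modified two-point interpolation: `M_Φ(λ₁,λ₂;ω₁,ω₂)` is positive semi-definite
iff the two-point Pick problem `λⱼ ↦ ωⱼ` is solvable in the Schur class. -/
theorem MPhi_posSemidef_iff_pick_solvable (l1 l2 w1 w2 : ℂ)
    (hl1 : ‖l1‖ < 1) (hl2 : ‖l2‖ < 1) (hne : l1 ≠ l2)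
    (hw1 : ‖w1‖ < 1) (hw2 : ‖w2‖ < 1) :
    (Matrix.of fun i j : Fin 2 =>
        (1 - ![w1, w2] i * conj (![w1, w2] j)) ^ 2 /
          (1 - ![l1, l2] i * conj (![l1, l2] j)) ^ 2).PosSemidef
      ↔ ∃ f : ℂ → ℂ, DifferentiableOn ℂ f {z : ℂ | ‖z‖ < 1}
          ∧ (∀ z : ℂ, ‖z‖ < 1 → ‖f z‖ ≤ 1)
          ∧ f l1 = w1 ∧ f l2 = w2 := by
  rw [← ball_zero_eq]
  refine (MPhi_posSemidef_iff_norm_mobius_le hl1 hl2 hw1 hw2).trans ⟨fun h => ?_, ?_⟩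
  · obtain ⟨f, hd, hmaps, hf1, hf2⟩ :=
      exists_mapsTo_closedBall_of_norm_mobius_le hl1 hl2 hne hw1 hw2 h
    exact ⟨f, hd, fun z hz => mem_closedBall_zero_iff.1 (hmaps (mem_ball_zero_iff.2 hz)), hf1, hf2⟩
  · rintro ⟨f, hd, hf, rfl, rfl⟩
    exact norm_mobius_le_norm_mobius_of_mapsTo hd
      (fun z hz => mem_closedBall_zero_iff.2 (hf z (mem_ball_zero_iff.1 hz))) hl1 hl2 hw1
end

section
/- For the interpolation data λ₁ = 2/3, λ₂ = 3/4, λ₃ = 0 and ω₁ = 1/3, ω₂ = 1/4, ω₃ = 0, the 3×3 Pick matrix P with (i,j)-entry (1−ω_i·conj(ω_j))/(1−λ_i·conj(λ_j)), which equals [[8/5, 11/6, 1], [11/6, 15/7, 1], [1, 1, 1]], is not positive semi-definite (its determinant is −11/1260 < 0), while its entrywise (Schur) square P⊙P = [[64/25, 121/36, 1], [121/36, 225/49, 1], [1, 1, 1]] is positive definite. -/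
/-!
The Pick matrix has negative determinant, which rules out positive semi-definiteness.
Its Schur square is positive definite because its factorisation `Uᴴ D U`, with `U` unitriangular,
has positive pivots `D = diag(64/25, 727175/4064256, 45119/727175)`.
-/

open Complex ComplexConjugate ComplexOrder Matrix

noncomputable def pickMatrix {n : Type*} (lam ω : n → ℂ) : Matrix n n ℂ :=
  of fun i j => (1 - ω i * conj (ω j)) / (1 - lam i * conj (lam j))

lemma pickMatrix_three_points :
    pickMatrix ![2/3, 3/4, 0] ![1/3, 1/4, 0] = !![8/5, 11/6, 1; 11/6, 15/7, 1; 1, 1, 1] := by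
  ext i j
  fin_cases i <;> fin_cases j <;> simp [pickMatrix, map_ofNat] <;> norm_num

lemma det_pickMatrix_three_points :
    (!![8/5, 11/6, 1; 11/6, 15/7, 1; 1, 1, 1] : Matrix (Fin 3) (Fin 3) ℂ).det = -11 / 1260 := by
  simp [det_fin_three]
  norm_num

lemma not_posSemidef_of_det_neg {n : Type*} [Fintype n] [DecidableEq n] {A : Matrix n n ℂ}
    (h : A.det.re < 0) : ¬ A.PosSemidef :=
  fun hA => (Complex.le_def.mp hA.det_nonneg).1.not_gt h

lemma sq_entries_pickMatrix_three_points :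
    (of fun i j => (!![8/5, 11/6, 1; 11/6, 15/7, 1; 1, 1, 1] : Matrix (Fin 3) (Fin 3) ℂ) i j ^ 2)
      = !![64/25, 121/36, 1; 121/36, 225/49, 1; 1, 1, 1] := by
  ext i j
  fin_cases i <;> fin_cases j <;> norm_num

lemma ldl_sq_pickMatrix_three_points :
    let U : Matrix (Fin 3) (Fin 3) ℂ := !![1, 3025/2304, 25/64; 0, 1, -1271844/727175; 0, 0, 1]
    (!![64/25, 121/36, 1; 121/36, 225/49, 1; 1, 1, 1] : Matrix (Fin 3) (Fin 3) ℂ)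
      = Uᴴ * diagonal ![64/25, 727175/4064256, 45119/727175] * U := by
  intro U
  ext i j
  fin_cases i <;> fin_cases j <;>
    simp [U, mul_apply, Fin.sum_univ_three, conjTranspose_apply, diagonal, map_ofNat] <;>
    norm_num

lemma posDef_sq_pickMatrix_three_points :
    (!![64/25, 121/36, 1; 121/36, 225/49, 1; 1, 1, 1] : Matrix (Fin 3) (Fin 3) ℂ).PosDef := by
  rw [ldl_sq_pickMatrix_three_points]
  refine PosDef.conjTranspose_mul_mul_same ?_ (mulVec_injective_of_isUnit ?_)
  · refine PosDef.diagonal fun i => ?_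
    fin_cases i <;> norm_num [Complex.lt_def]
  · simp [isUnit_iff_isUnit_det, det_fin_three]

/-- For the data `λ = (2/3, 3/4, 0)`, `ω = (1/3, 1/4, 0)`, the 3×3 Pick matrix
equals `[[8/5, 11/6, 1], [11/6, 15/7, 1], [1, 1, 1]]`, is not positive
semi-definite (its determinant is `−11/1260`), while its Schur (entrywise)
square equals `[[64/25, 121/36, 1], [121/36, 225/49, 1], [1, 1, 1]]` and is
positive definite. -/
theorem pick_counterexample_three_points :
    let P : Matrix (Fin 3) (Fin 3) ℂ := Matrix.of fun i j : Fin 3 =>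
      (1 - ![(1:ℂ)/3, 1/4, 0] i * conj (![(1:ℂ)/3, 1/4, 0] j)) /
        (1 - ![(2:ℂ)/3, 3/4, 0] i * conj (![(2:ℂ)/3, 3/4, 0] j))
    P = !![8/5, 11/6, 1; 11/6, 15/7, 1; 1, 1, 1] ∧
    ¬ P.PosSemidef ∧
    P.det = -11 / 1260 ∧
    (Matrix.of fun i j : Fin 3 => (P i j) ^ 2)
      = !![64/25, 121/36, 1; 121/36, 225/49, 1; 1, 1, 1] ∧
    (Matrix.of fun i j : Fin 3 => (P i j) ^ 2).PosDef := by
  intro P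
  have hP : P = !![8/5, 11/6, 1; 11/6, 15/7, 1; 1, 1, 1] := pickMatrix_three_points
  have hdet : P.det = -11 / 1260 := hP ▸ det_pickMatrix_three_points
  have hsq := sq_entries_pickMatrix_three_points
  rw [← hP] at hsq
  refine ⟨hP, not_posSemidef_of_det_neg ?_, hdet, hsq, hsq ▸ posDef_sq_pickMatrix_three_points⟩
  rw [hdet]
  norm_num
end
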